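/- Assume [k : k^p] < ∞ and that √τ = m. Then for all sufficiently large q = p^e: every homogeneous g ∈ S with Jg ⊆ m^{[q]}, g ∉ m^{[q]}, and f^{p−1}g^p ∈ m^{[pq]} satisfies deg(g) − (n+1)q ≥ −reg(S/τ) − (n+1). (Via the Čech-complex identification of H^{n+1−c}_m(S/J) inside H^{n+1}_m(S)[−d], this says the Frobenius action on H^{n+1−c}_m(S/J) is injective in all degrees < a(S/J) − reg(S/τ), where a(S/J) = d − (n+1).) -/

import Mathlib

/-!
STATEMENT 8: Assume `[k : k^p] < ∞` and `√τ = m`, where `τ` is the smallest ideal with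
`J = (f_1, …, f_c) ⊆ τ` and `f^{p−1} ∈ τ^{[p]}` (`f = f_1⋯f_c` a product of a
homogeneous regular sequence). Then for all sufficiently large `q = p^e`: every
homogeneous `g ∈ S` with `Jg ⊆ m^{[q]}`, `g ∉ m^{[q]}` and `f^{p−1}g^p ∈ m^{[pq]}`
satisfies `deg(g) − (n+1)q ≥ −reg(S/τ) − (n+1)`.  (Frobenius on `H^{n+1−c}_m(S/J)` is
injective in degrees `< a(S/J) − reg(S/τ)`.)
-/

noncomputable section

open MvPolynomial

/-- The homogeneous maximal ideal `m = (x_0, …, x_n)` of `k[x_0, …, x_n]`. -/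
def maxIdeal (k : Type) [Field k] (n : ℕ) : Ideal (MvPolynomial (Fin (n + 1)) k) :=
  Ideal.span (Set.range MvPolynomial.X)

/-- The `q`-th bracket (Frobenius) power `I^{[q]}` of an ideal. -/
def brk {R : Type} [CommRing R] (I : Ideal R) (q : ℕ) : Ideal R :=
  Ideal.span ((fun a => a ^ q) '' (I : Set R))

/-- `reg(S/I)`: the largest integer `a` such that `m^a ⊄ I` (for `I` containing a power
of `m`). -/
def reg (k : Type) [Field k] (n : ℕ) (I : Ideal (MvPolynomial (Fin (n + 1)) k)) : ℕ :=
  sSup {a : ℕ | ¬ (maxIdeal k n) ^ a ≤ I}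

/-!
Put `q = p^e` and `a = (m^[q] : g)`, so that `J ⊆ a`. Since `S` is free over `S^p`, Frobenius
commutes with colons: `(I^[p] : g^p) ⊆ (I : g)^[p]`; hence `f^{p-1} ∈ a^[p]`, and minimality of
`τ` gives `m^{reg(S/τ)+1} ⊆ τ ⊆ a`. On the other hand, if `x^α` is a monomial of `g` with all
`α_i < q`, then `x^β g ∉ m^[q]` for the complementary `x^β` with `α + β = (q-1, …, q-1)`, so
`deg x^β = (n+1)(q-1) - deg g` is at most `reg(S/τ)`.
-/

/-- A basis of `R` over its subring `R^p`, with coordinates recorded through their `p`-th roots. -/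
structure FrobeniusDecomposition (R : Type) [CommRing R] (p : ℕ) (ι : Type) where
  basis : ι → R
  coord : R →+ (ι →₀ R)
  coord_pow_mul (s r : R) : coord (s ^ p * r) = s • coord r
  sum_coord (r : R) : (coord r).sum (fun i a => a ^ p * basis i) = r

namespace FrobeniusDecomposition

section General

variable {R ι : Type} [CommRing R] {p : ℕ}

theorem coord_mul_mem_of_mem_brk (D : FrobeniusDecomposition R p ι) {I : Ideal R} {x : R}
    (hx : x ∈ brk I p) (r : R) (i : ι) : D.coord (r * x) i ∈ I := by
  induction hx using Submodule.span_induction generalizing r with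
  | mem _ h =>
    obtain ⟨a, ha, rfl⟩ := h
    rw [mul_comm, D.coord_pow_mul, Finsupp.smul_apply, smul_eq_mul]
    exact I.mul_mem_right _ ha
  | zero => simp
  | add x y _ _ hx hy => rw [mul_add, map_add, Finsupp.add_apply]; exact add_mem (hx r) (hy r)
  | smul s x _ hx => rw [smul_eq_mul, ← mul_assoc]; exact hx (r * s)

theorem mem_brk_colon_of_mul_pow_mem (D : FrobeniusDecomposition R p ι) (I : Ideal R) {g h : R}
    (hm : h * g ^ p ∈ brk I p) : h ∈ brk (I.colon (Ideal.span {g})) p := by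
  have hcoord (i : ι) : D.coord h i ∈ I.colon (Ideal.span {g}) := by
    rw [Ideal.mem_colon_span_singleton, mul_comm, ← smul_eq_mul, ← Finsupp.smul_apply,
      ← D.coord_pow_mul, mul_comm, ← one_mul (h * g ^ p)]
    exact D.coord_mul_mem_of_mem_brk hm 1 i
  rw [← D.sum_coord h]
  exact Ideal.sum_mem _ fun i _ => Ideal.mul_mem_right _ _ (Ideal.subset_span ⟨_, hcoord i, rfl⟩)

end General

section Field

variable (k : Type) [Field k] (p : ℕ) [Fact p.Prime] [CharP k p]

def ofField :
    FrobeniusDecomposition k p (Module.Basis.ofVectorSpaceIndex (frobenius k p).fieldRange k) where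
  basis := Module.Basis.ofVectorSpace (frobenius k p).fieldRange k
  coord := (Finsupp.mapRange.addMonoidHom
      (frobenius k p).rangeRestrictFieldEquiv.symm.toAddMonoidHom).comp
    (Module.Basis.ofVectorSpace (frobenius k p).fieldRange k).repr.toAddMonoidHom
  coord_pow_mul s r := by
    have hs : s ^ p * r = (frobenius k p).rangeRestrictFieldEquiv s • r := by
      rw [Subfield.smul_def, RingHom.rangeRestrictFieldEquiv_apply_coe, frobenius_def, smul_eq_mul]
    ext i
    simp [hs]
  sum_coord r := by
    have hpow (a : (frobenius k p).fieldRange) :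
        ((frobenius k p).rangeRestrictFieldEquiv.symm a) ^ p = a := by
      rw [← frobenius_def, RingHom.rangeRestrictFieldEquiv_apply_symm_apply]
    conv_rhs =>
      rw [← (Module.Basis.ofVectorSpace (frobenius k p).fieldRange k).linearCombination_repr r]
    rw [AddMonoidHom.comp_apply, Finsupp.mapRange.addMonoidHom_apply, Finsupp.sum_mapRange_index
      (fun _ => by simp [zero_pow (Fact.out : p.Prime).ne_zero])]
    simp [Finsupp.linearCombination_apply, hpow, Subfield.smul_def]

end Field

section MvPolynomial

variable {R ι σ : Type} [CommRing R] {p : ℕ}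

def expQuot (p : ℕ) (α : σ →₀ ℕ) : σ →₀ ℕ := α.mapRange (· / p) (Nat.zero_div p)

def expRem (p : ℕ) (α : σ →₀ ℕ) : σ →₀ ℕ := α.mapRange (· % p) (Nat.zero_mod p)

theorem smul_expQuot_add_expRem (α : σ →₀ ℕ) : p • expQuot p α + expRem p α = α := by
  ext x
  simp [expQuot, expRem, Nat.div_add_mod]

theorem expQuot_smul_add (hp : 0 < p) (δ α : σ →₀ ℕ) :
    expQuot p (p • δ + α) = δ + expQuot p α := by
  ext x
  simp [expQuot, Nat.mul_add_div hp]

theorem expRem_smul_add (δ α : σ →₀ ℕ) : expRem p (p • δ + α) = expRem p α := by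
  ext x
  simp [expRem]

variable (D : FrobeniusDecomposition R p ι) (σ)

/-- Writing `α = p δ + ρ` with `ρ = expRem p α`, the term `c x^α` contributes `x^δ * coord c i`
at index `(i, ρ)`. -/
def mvPolynomialCoord : MvPolynomial σ R →+ (ι × (σ →₀ ℕ) →₀ MvPolynomial σ R) :=
  (Finsupp.liftAddHom fun α =>
    (Finsupp.embDomain.addMonoidHom (Function.Embedding.sectL ι (expRem p α))).comp
      ((Finsupp.mapRange.addMonoidHom (monomial (expQuot p α)).toAddMonoidHom).comp D.coord)).comp
    AddMonoidAlgebra.coeffAddEquiv.toAddMonoidHom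

variable {σ}

theorem mvPolynomialCoord_monomial (α : σ →₀ ℕ) (c : R) :
    D.mvPolynomialCoord σ (monomial α c) =
      Finsupp.embDomain (Function.Embedding.sectL ι (expRem p α))
        (Finsupp.mapRange (monomial (expQuot p α)) (map_zero _) (D.coord c)) :=
  Finsupp.liftAddHom_apply_single _ _ _

theorem mvPolynomialCoord_monomial_apply [DecidableEq σ] (α : σ →₀ ℕ) (c : R) (i : ι)
    (β : σ →₀ ℕ) :
    D.mvPolynomialCoord σ (monomial α c) (i, β) =
      if β = expRem p α then monomial (expQuot p α) (D.coord c i) else 0 := by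
  rw [mvPolynomialCoord_monomial]
  split_ifs with h
  · subst h
    exact (Finsupp.embDomain_apply_self _ _ i).trans Finsupp.mapRange_apply
  · exact Finsupp.embDomain_of_notMem_range _ _ _ fun ⟨_, h'⟩ => h (congrArg Prod.snd h').symm

variable [Fact p.Prime] [CharP R p]

theorem mvPolynomialCoord_pow_mul (s r : MvPolynomial σ R) :
    D.mvPolynomialCoord σ (s ^ p * r) = s • D.mvPolynomialCoord σ r := by
  classical
  have hp : 0 < p := (Fact.out : p.Prime).pos
  induction r using MvPolynomial.induction_on' with
  | add r₁ r₂ ih₁ ih₂ => rw [mul_add, map_add, ih₁, ih₂, map_add, smul_add]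
  | monomial α c =>
    induction s using MvPolynomial.induction_on' with
    | add s₁ s₂ ih₁ ih₂ => rw [add_pow_char, add_mul, map_add, ih₁, ih₂, add_smul]
    | monomial δ a =>
      ext ⟨i, β⟩
      rw [monomial_pow, monomial_mul, Finsupp.smul_apply, smul_eq_mul,
        mvPolynomialCoord_monomial_apply, mvPolynomialCoord_monomial_apply, expRem_smul_add,
        expQuot_smul_add hp, D.coord_pow_mul, Finsupp.smul_apply, smul_eq_mul]
      split_ifs
      · rw [monomial_mul]
      · rw [mul_zero]

theorem sum_mvPolynomialCoord (r : MvPolynomial σ R) :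
    (D.mvPolynomialCoord σ r).sum (fun i a => a ^ p * monomial i.2 (D.basis i.1)) = r := by
  have hp : p ≠ 0 := (Fact.out : p.Prime).ne_zero
  induction r using MvPolynomial.induction_on' with
  | add r₁ r₂ ih₁ ih₂ =>
    rw [map_add, Finsupp.sum_add_index' (fun _ => by simp [zero_pow hp])
      (fun _ _ _ => by rw [add_pow_char, add_mul]), ih₁, ih₂]
  | monomial α c =>
    rw [mvPolynomialCoord_monomial, Finsupp.sum_embDomain,
      Finsupp.sum_mapRange_index (fun _ => by simp [zero_pow hp])]
    conv_rhs => rw [← D.sum_coord c]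
    simp only [Function.Embedding.sectL_apply, monomial_pow, monomial_mul,
      smul_expQuot_add_expRem, Finsupp.sum, ← map_sum]

variable (σ) in
def mvPolynomial : FrobeniusDecomposition (MvPolynomial σ R) p (ι × (σ →₀ ℕ)) where
  basis i := monomial i.2 (D.basis i.1)
  coord := D.mvPolynomialCoord σ
  coord_pow_mul := D.mvPolynomialCoord_pow_mul
  sum_coord := D.sum_mvPolynomialCoord

end MvPolynomial

end FrobeniusDecomposition

section BracketPower

variable {R : Type} [CommRing R] (p : ℕ)

theorem brk_pow_eq_map [ExpChar R p] (I : Ideal R) (e : ℕ) :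
    brk I (p ^ e) = I.map (iterateFrobenius R p e) :=
  rfl

theorem brk_brk [ExpChar R p] (I : Ideal R) (e : ℕ) : brk (brk I (p ^ e)) p = brk I (p * p ^ e) :=
  calc brk (brk I (p ^ e)) p = brk (brk I (p ^ e)) (p ^ 1) := by rw [pow_one]
    _ = brk I (p ^ (1 + e)) := by
      rw [brk_pow_eq_map, brk_pow_eq_map, brk_pow_eq_map, Ideal.map_map, iterateFrobenius_add]
    _ = brk I (p * p ^ e) := by rw [pow_add, pow_one]

theorem brk_span_range_X {σ : Type} [ExpChar (MvPolynomial σ R) p] (e : ℕ) :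
    brk (Ideal.span (Set.range (X : σ → MvPolynomial σ R))) (p ^ e) =
      Ideal.span (Set.range fun i => X i ^ p ^ e) := by
  rw [brk_pow_eq_map, Ideal.map_span, ← Set.range_comp]
  rfl

end BracketPower

section MonomialIdeals

variable {R σ : Type} [CommRing R]

theorem mem_span_range_X_pow_iff (q : ℕ) (x : MvPolynomial σ R) :
    x ∈ Ideal.span (Set.range fun i => (X i : MvPolynomial σ R) ^ q) ↔
      ∀ α ∈ x.support, ∃ i, q ≤ α i := by
  have hrange : (Set.range fun i => (X i : MvPolynomial σ R) ^ q) =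
      (fun s => monomial s 1) '' Set.range fun i => Finsupp.single i q := by
    rw [← Set.range_comp]
    exact congrArg Set.range (funext fun i => X_pow_eq_monomial)
  simp only [hrange, mem_ideal_span_monomial_image, Set.exists_range_iff, Finsupp.single_le_iff]

theorem monomial_one_mem_span_range_X_pow (α : σ →₀ ℕ) :
    monomial α (1 : R) ∈ Ideal.span (Set.range X) ^ α.degree := by
  rw [monomial_eq, C_1, one_mul, Finsupp.degree_apply, ← Finset.prod_pow_eq_pow_sum]
  exact Ideal.prod_mem_prod fun i _ =>
    Ideal.pow_mem_pow (Ideal.subset_span (Set.mem_range_self i)) _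

theorem card_mul_pred_lt_of_pow_le_colon [Fintype σ] {g : MvPolynomial σ R} {D q s : ℕ}
    (hg : g.IsHomogeneous D)
    (hgq : g ∉ Ideal.span (Set.range fun i => (X i : MvPolynomial σ R) ^ q))
    (hs : Ideal.span (Set.range X) ^ s ≤
      (Ideal.span (Set.range fun i => (X i : MvPolynomial σ R) ^ q)).colon (Ideal.span {g})) :
    Fintype.card σ * (q - 1) < D + s := by
  rw [mem_span_range_X_pow_iff] at hgq
  push Not at hgq
  obtain ⟨α, hα, hαq⟩ := hgq
  have hαD : α.degree = D := by
    by_contra h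
    exact mem_support_iff.mp hα (hg.coeff_eq_zero h)
  set β : σ →₀ ℕ := Finsupp.equivFunOnFinite.symm fun i => q - 1 - α i
  have hβα (i : σ) : (β + α) i = q - 1 := by
    have := hαq i
    simp only [β, Finsupp.add_apply, Finsupp.coe_equivFunOnFinite_symm]
    omega
  have hdeg : β.degree + D = Fintype.card σ * (q - 1) := by
    rw [← hαD, ← map_add, Finsupp.degree_eq_sum, Finset.sum_congr rfl fun i _ => hβα i,
      Finset.sum_const, Finset.card_univ, smul_eq_mul]
  by_contra! h
  have hβg : monomial β 1 * g ∈ Ideal.span (Set.range fun i => (X i : MvPolynomial σ R) ^ q) :=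
    Ideal.mem_colon_span_singleton.mp
      (hs (Ideal.pow_le_pow_right (by omega) (monomial_one_mem_span_range_X_pow β)))
  have hsupp : β + α ∈ (monomial β 1 * g).support := by
    rwa [mem_support_iff, coeff_monomial_mul, one_mul, ← mem_support_iff]
  obtain ⟨i, hi⟩ := (mem_span_range_X_pow_iff q _).mp hβg _ hsupp
  have := hαq i
  rw [hβα i] at hi
  omega

end MonomialIdeals

theorem pow_reg_succ_le {k : Type} [Field k] {n : ℕ} (I : Ideal (MvPolynomial (Fin (n + 1)) k))
    (hI : maxIdeal k n ≤ I.radical) : maxIdeal k n ^ (reg k n I + 1) ≤ I := by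
  obtain ⟨N, hN⟩ := Ideal.exists_pow_le_of_le_radical_of_fg hI
    (Submodule.fg_span (Set.finite_range _))
  have hbdd : BddAbove {a : ℕ | ¬ maxIdeal k n ^ a ≤ I} :=
    ⟨N, fun a ha => not_lt.mp fun hNa => ha ((Ideal.pow_le_pow_right hNa.le).trans hN)⟩
  by_contra h
  exact Nat.not_succ_le_self _ (le_csSup hbdd h)

theorem stmt8_general (k : Type) [Field k] (p : ℕ) [Fact p.Prime] [CharP k p]
    (n c : ℕ)
    (f : Fin c → MvPolynomial (Fin (n + 1)) k)
    (J : Ideal (MvPolynomial (Fin (n + 1)) k))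
    (τ : Ideal (MvPolynomial (Fin (n + 1)) k))
    (hmin : ∀ a : Ideal (MvPolynomial (Fin (n + 1)) k),
      J ≤ a → (∏ j, f j) ^ (p - 1) ∈ brk a p → τ ≤ a)
    (hrad : τ.radical = maxIdeal k n) :
    ∃ e₀ : ℕ, ∀ e ≥ e₀, ∀ (g : MvPolynomial (Fin (n + 1)) k) (D : ℕ),
      g.IsHomogeneous D →
      Ideal.span {g} * J ≤ brk (maxIdeal k n) (p ^ e) →
      g ∉ brk (maxIdeal k n) (p ^ e) →
      (∏ j, f j) ^ (p - 1) * g ^ p ∈ brk (maxIdeal k n) (p * p ^ e) →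
      (D : ℤ) - ((n : ℤ) + 1) * (p : ℤ) ^ e ≥ -(reg k n τ : ℤ) - ((n : ℤ) + 1) := by
  refine ⟨0, fun e _ g D hg hJg hgq hfg => ?_⟩
  have hJa : J ≤ (brk (maxIdeal k n) (p ^ e)).colon (Ideal.span {g}) := fun x hx =>
    Ideal.mem_colon_span_singleton.mpr <| by
      simpa only [mul_comm] using hJg (Ideal.mul_mem_mul (Ideal.mem_span_singleton_self g) hx)
  have hfa := ((FrobeniusDecomposition.ofField k p).mvPolynomial _).mem_brk_colon_of_mul_pow_mem
    _ (by rwa [brk_brk])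
  have hτa := (pow_reg_succ_le τ hrad.ge).trans (hmin _ hJa hfa)
  rw [maxIdeal, brk_span_range_X] at hgq hτa
  have key := card_mul_pred_lt_of_pow_le_colon hg hgq hτa
  have hq : 1 ≤ p ^ e := Nat.one_le_pow _ _ (Fact.out : p.Prime).pos
  rw [Fintype.card_fin] at key
  zify [hq] at key
  linarith

theorem stmt8 (k : Type) [Field k] (p : ℕ) [Fact p.Prime] [CharP k p]
    (hfin : (frobenius k p).Finite) (n c : ℕ)
    (f : Fin c → MvPolynomial (Fin (n + 1)) k) (df : Fin c → ℕ)
    (hhom : ∀ j, (f j).IsHomogeneous (df j))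
    (hreg : RingTheory.Sequence.IsRegular (MvPolynomial (Fin (n + 1)) k) (List.ofFn f))
    (J : Ideal (MvPolynomial (Fin (n + 1)) k)) (hJ : J = Ideal.span (Set.range f))
    (τ : Ideal (MvPolynomial (Fin (n + 1)) k))
    (hJτ : J ≤ τ) (hfτ : (∏ j, f j) ^ (p - 1) ∈ brk τ p)
    (hmin : ∀ a : Ideal (MvPolynomial (Fin (n + 1)) k),
      J ≤ a → (∏ j, f j) ^ (p - 1) ∈ brk a p → τ ≤ a)
    (hrad : τ.radical = maxIdeal k n) :
    ∃ e₀ : ℕ, ∀ e ≥ e₀, ∀ (g : MvPolynomial (Fin (n + 1)) k) (D : ℕ),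
      g.IsHomogeneous D →
      Ideal.span {g} * J ≤ brk (maxIdeal k n) (p ^ e) →
      g ∉ brk (maxIdeal k n) (p ^ e) →
      (∏ j, f j) ^ (p - 1) * g ^ p ∈ brk (maxIdeal k n) (p * p ^ e) →
      (D : ℤ) - ((n : ℤ) + 1) * (p : ℤ) ^ e ≥ -(reg k n τ : ℤ) - ((n : ℤ) + 1) :=
  stmt8_general k p n c f J τ hmin hrad
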